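/- Let a ∈ ℂ. A linear map φ on the Lie algebra 𝒲(a,−1) is a 1/2-derivation if and only if there exist two finitely supported families (α_t)_{t ∈ ℤ} and (β_t)_{t ∈ ℤ} of complex numbers such that φ(L_m) = Σ_{t ∈ ℤ} α_t L_{m+t} + Σ_{t ∈ ℤ} β_t I_{m+t} and φ(I_m) = Σ_{t ∈ ℤ} α_t I_{m+t} for all m ∈ ℤ. -/

import Mathlib

/-- The underlying space of the Lie algebra `𝒲(a,b)`, with basis
`L m = single (Sum.inl m) 1` and `I n = single (Sum.inr n) 1`. -/
abbrev Wab : Type := (ℤ ⊕ ℤ) →₀ ℂ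

/-- The bracket of `𝒲(a,b)` on basis elements:
`[L m, L n] = (m-n) L (m+n)`, `[L m, I n] = -(n+a+bm) I (m+n)`, `[I m, I n] = 0`. -/
noncomputable def wabBasic (a b : ℂ) : ℤ ⊕ ℤ → ℤ ⊕ ℤ → Wab
  | Sum.inl m, Sum.inl n => (((m : ℂ) - (n : ℂ))) • Finsupp.single (Sum.inl (m + n)) (1 : ℂ)
  | Sum.inl m, Sum.inr n => (-((n : ℂ) + a + b * (m : ℂ))) • Finsupp.single (Sum.inr (m + n)) (1 : ℂ)
  | Sum.inr m, Sum.inl n => (((m : ℂ) + a + b * (n : ℂ))) • Finsupp.single (Sum.inr (m + n)) (1 : ℂ)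
  | Sum.inr _, Sum.inr _ => 0

/-- The Lie bracket of `𝒲(a,b)`, extended bilinearly from basis elements. -/
noncomputable def wabBracket (a b : ℂ) (f g : Wab) : Wab :=
  f.sum fun p c => g.sum fun q d => (c * d) • wabBasic a b p q

/-- The basis element `L m` of `𝒲(a,b)`. -/
noncomputable def Lgen (m : ℤ) : Wab := Finsupp.single (Sum.inl m) 1

/-- The basis element `I m` of `𝒲(a,b)`. -/
noncomputable def Igen (m : ℤ) : Wab := Finsupp.single (Sum.inr m) 1


/-!
Reading off coordinates in the 1/2-derivation identity for the pairs `(L m, L n)` and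
`(L m, I n)` gives a linear recurrence in `(m, r)` for each of the four coefficient families
`φ (L m) (L r)`, `φ (L m) (I r)`, `φ (I m) (L r)`, `φ (I m) (I r)`. Putting `n = 0` shows, off
one exceptional line in each case, that the first two depend only on `r - m`, that the third
vanishes and that the fourth equals the first; a second choice of `n` reaches the exceptional
line. So `φ` is determined by `φ (L 0)`, whose two halves are `α` and `β`. Conversely such a `φ`
satisfies the identity on pairs of generators by direct computation (for `b = -1` the
`I`-coefficients match exactly), and the identity extends to all of `𝒲(a,-1)` by antisymmetry
and bilinearity.
-/

section FinsuppCoeff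

variable {ι κ R : Type*} [Semiring R]

theorem sum_smul_apply_eq_mul [DecidableEq ι] (v : ι →₀ R) (g : ι → κ →₀ R) (k : κ) (i₀ : ι)
    (c : R) (hg : ∀ i, g i k = if i = i₀ then c else 0) :
    (v.sum fun i x => x • g i) k = v i₀ * c := by
  simp only [Finsupp.sum_apply, Finsupp.smul_apply, hg, smul_eq_mul, mul_ite, mul_zero]
  rw [Finsupp.sum_ite_eq']
  split_ifs with h
  · rfl
  · rw [Finsupp.notMem_support_iff.mp h, zero_mul]

theorem sum_smul_apply_eq_zero (v : ι →₀ R) (g : ι → κ →₀ R) (k : κ) (hg : ∀ i, g i k = 0) :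
    (v.sum fun i x => x • g i) k = 0 := by
  simp [Finsupp.sum_apply, hg]

end FinsuppCoeff

theorem sum_smul_Lgen_apply_inl (v : ℤ →₀ ℂ) (m r : ℤ) :
    (v.sum fun t c => c • Lgen (m + t)) (Sum.inl r) = v (r - m) := by
  simpa [Lgen] using sum_smul_apply_eq_mul v (fun t => Lgen (m + t)) (Sum.inl r) (r - m) 1
    fun t => by simp [Lgen, Finsupp.single_apply, eq_sub_iff_add_eq, add_comm]

theorem sum_smul_Lgen_apply_inr (v : ℤ →₀ ℂ) (m r : ℤ) :
    (v.sum fun t c => c • Lgen (m + t)) (Sum.inr r) = 0 :=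
  sum_smul_apply_eq_zero v _ _ fun t => by simp [Lgen]

theorem sum_smul_Igen_apply_inl (v : ℤ →₀ ℂ) (m r : ℤ) :
    (v.sum fun t c => c • Igen (m + t)) (Sum.inl r) = 0 :=
  sum_smul_apply_eq_zero v _ _ fun t => by simp [Igen]

theorem sum_smul_Igen_apply_inr (v : ℤ →₀ ℂ) (m r : ℤ) :
    (v.sum fun t c => c • Igen (m + t)) (Sum.inr r) = v (r - m) := by
  simpa [Igen] using sum_smul_apply_eq_mul v (fun t => Igen (m + t)) (Sum.inr r) (r - m) 1
    fun t => by simp [Igen, Finsupp.single_apply, eq_sub_iff_add_eq, add_comm]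

theorem wabBasic_swap (a b : ℂ) (p q : ℤ ⊕ ℤ) : wabBasic a b q p = -wabBasic a b p q := by
  rcases p with m | m <;> rcases q with n | n <;>
    simp only [wabBasic, neg_zero, ← neg_smul, neg_neg, neg_sub, add_comm n m]

theorem wabBracket_swap (a b : ℂ) (f g : Wab) : wabBracket a b g f = -wabBracket a b f g := by
  simp only [wabBracket, Finsupp.sum, ← Finset.sum_neg_distrib]
  rw [Finset.sum_comm]
  refine Finset.sum_congr rfl fun q _ => Finset.sum_congr rfl fun p _ => ?_
  rw [wabBasic_swap, smul_neg, mul_comm]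

section Bracket

variable (a b : ℂ)

theorem wabBracket_single_right (f : Wab) (q : ℤ ⊕ ℤ) :
    wabBracket a b f (Finsupp.single q 1) = f.sum fun p c => c • wabBasic a b p q := by
  refine Finsupp.sum_congr fun p _ => ?_
  rw [Finsupp.sum_single_index] <;> simp

theorem wabBracket_single_single (p q : ℤ ⊕ ℤ) :
    wabBracket a b (Finsupp.single p 1) (Finsupp.single q 1) = wabBasic a b p q := by
  rw [wabBracket_single_right, Finsupp.sum_single_index] <;> simp

theorem wabBracket_Lgen_Lgen (m n : ℤ) :
    wabBracket a b (Lgen m) (Lgen n) = ((m : ℂ) - n) • Lgen (m + n) :=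
  wabBracket_single_single a b _ _

theorem wabBracket_Lgen_Igen (m n : ℤ) :
    wabBracket a b (Lgen m) (Igen n) = (-((n : ℂ) + a + b * m)) • Igen (m + n) :=
  wabBracket_single_single a b _ _

theorem wabBracket_Igen_Igen (m n : ℤ) : wabBracket a b (Igen m) (Igen n) = 0 :=
  wabBracket_single_single a b _ _

theorem wabBracket_Lgen_apply_inl (f : Wab) (n q : ℤ) :
    wabBracket a b f (Lgen n) (Sum.inl q) = ((q : ℂ) - 2 * n) * f (Sum.inl (q - n)) := by
  rw [Lgen, wabBracket_single_right, sum_smul_apply_eq_mul _ _ _ (Sum.inl (q - n)), mul_comm]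
  rintro (p | p)
  · simp only [wabBasic, Finsupp.smul_apply, Finsupp.single_apply, Sum.inl.injEq, smul_eq_mul]
    split_ifs <;> first | omega | (subst_vars; push_cast; ring)
  · simp [wabBasic]

theorem wabBracket_Lgen_apply_inr (f : Wab) (n q : ℤ) :
    wabBracket a b f (Lgen n) (Sum.inr q) =
      ((q : ℂ) - n + a + b * n) * f (Sum.inr (q - n)) := by
  rw [Lgen, wabBracket_single_right, sum_smul_apply_eq_mul _ _ _ (Sum.inr (q - n)), mul_comm]
  rintro (p | p)
  · simp [wabBasic]
  · simp only [wabBasic, Finsupp.smul_apply, Finsupp.single_apply, Sum.inr.injEq, smul_eq_mul]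
    split_ifs <;> first | omega | (subst_vars; push_cast; ring)

theorem wabBracket_Igen_apply_inl (f : Wab) (n q : ℤ) :
    wabBracket a b f (Igen n) (Sum.inl q) = 0 := by
  rw [Igen, wabBracket_single_right, sum_smul_apply_eq_zero]
  rintro (p | p) <;> simp [wabBasic]

theorem wabBracket_Igen_apply_inr (f : Wab) (n q : ℤ) :
    wabBracket a b f (Igen n) (Sum.inr q) =
      -((n : ℂ) + a + b * (q - n)) * f (Sum.inl (q - n)) := by
  rw [Igen, wabBracket_single_right, sum_smul_apply_eq_mul _ _ _ (Sum.inl (q - n)), mul_comm]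
  rintro (p | p)
  · simp only [wabBasic, Finsupp.smul_apply, Finsupp.single_apply, Sum.inr.injEq,
      Sum.inl.injEq, smul_eq_mul]
    split_ifs <;> first | omega | (subst_vars; push_cast; ring)
  · simp [wabBasic]

end Bracket

noncomputable def wabBracketBilin (a b : ℂ) : Wab →ₗ[ℂ] Wab →ₗ[ℂ] Wab :=
  Finsupp.linearCombination ℂ fun p => Finsupp.linearCombination ℂ (wabBasic a b p)

theorem wabBracketBilin_apply (a b : ℂ) (f g : Wab) :
    wabBracketBilin a b f g = wabBracket a b f g := by
  simp only [wabBracketBilin, wabBracket, Finsupp.linearCombination_apply,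
    LinearMap.finsupp_sum_apply, LinearMap.smul_apply, Finsupp.smul_sum, smul_smul]

section HalfDerivation

variable {a b : ℂ} {φ : Wab →ₗ[ℂ] Wab}

def IsHalfDerivationAt (a b : ℂ) (φ : Wab →ₗ[ℂ] Wab) (x y : Wab) : Prop :=
  φ (wabBracket a b x y) = (1 / 2 : ℂ) • (wabBracket a b (φ x) y + wabBracket a b x (φ y))

def IsHalfDerivation (a b : ℂ) (φ : Wab →ₗ[ℂ] Wab) : Prop :=
  ∀ x y : Wab, IsHalfDerivationAt a b φ x y

theorem IsHalfDerivationAt.swap {x y : Wab} (h : IsHalfDerivationAt a b φ x y) :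
    IsHalfDerivationAt a b φ y x := by
  rw [IsHalfDerivationAt, wabBracket_swap a b x y, map_neg, h, ← smul_neg, neg_add,
    wabBracket_swap a b (φ x) y, wabBracket_swap a b x (φ y), add_comm]

theorem isHalfDerivationAt_iff {x y : Wab} :
    IsHalfDerivationAt a b φ x y ↔ ∀ k, φ (wabBracket a b x y) k =
      1 / 2 * (wabBracket a b (φ x) y k - wabBracket a b (φ y) x k) := by
  simp only [IsHalfDerivationAt, wabBracket_swap a b (φ y), Finsupp.ext_iff, Finsupp.smul_apply,
    Finsupp.add_apply, Finsupp.neg_apply, smul_eq_mul, sub_eq_add_neg]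

theorem isHalfDerivation_of_single
    (h : ∀ p q, IsHalfDerivationAt a b φ (Finsupp.single p 1) (Finsupp.single q 1)) :
    IsHalfDerivation a b φ := by
  have hB : (wabBracketBilin a b).compr₂ φ =
      (1 / 2 : ℂ) • ((wabBracketBilin a b).comp φ + (wabBracketBilin a b).compl₂ φ) :=
    LinearMap.ext_basis Finsupp.basisSingleOne Finsupp.basisSingleOne fun p q => by
      simpa [IsHalfDerivationAt, wabBracketBilin_apply] using h p q
  intro x y
  simpa [IsHalfDerivationAt, wabBracketBilin_apply] using LinearMap.congr_fun₂ hB x y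

theorem isHalfDerivation_of_generators (hLL : ∀ m n, IsHalfDerivationAt a b φ (Lgen m) (Lgen n))
    (hLI : ∀ m n, IsHalfDerivationAt a b φ (Lgen m) (Igen n))
    (hII : ∀ m n, IsHalfDerivationAt a b φ (Igen m) (Igen n)) :
    IsHalfDerivation a b φ :=
  isHalfDerivation_of_single fun
    | .inl m, .inl n => hLL m n
    | .inl m, .inr n => hLI m n
    | .inr m, .inl n => (hLI n m).swap
    | .inr m, .inr n => hII m n

end HalfDerivation

namespace IsHalfDerivation

variable {a b : ℂ} {φ : Wab →ₗ[ℂ] Wab} (h : IsHalfDerivation a b φ)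
include h

theorem apply_wabBracket_apply (x y : Wab) (k : ℤ ⊕ ℤ) :
    φ (wabBracket a b x y) k =
      1 / 2 * (wabBracket a b (φ x) y k - wabBracket a b (φ y) x k) :=
  isHalfDerivationAt_iff.mp (h x y) k

theorem recurrence_Lgen_inl (m n r : ℤ) :
    ((m : ℂ) - n) * φ (Lgen (m + n)) (Sum.inl r) =
      1 / 2 * (((r : ℂ) - 2 * n) * φ (Lgen m) (Sum.inl (r - n)) +
        (2 * m - r) * φ (Lgen n) (Sum.inl (r - m))) := by
  have H := h.apply_wabBracket_apply (Lgen m) (Lgen n) (Sum.inl r)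
  simp only [wabBracket_Lgen_Lgen, map_smul, Finsupp.smul_apply, smul_eq_mul,
    wabBracket_Lgen_apply_inl] at H
  linear_combination H

theorem recurrence_Lgen_inr (m n r : ℤ) :
    ((m : ℂ) - n) * φ (Lgen (m + n)) (Sum.inr r) =
      1 / 2 * (((r : ℂ) - n + a + b * n) * φ (Lgen m) (Sum.inr (r - n)) -
        ((r : ℂ) - m + a + b * m) * φ (Lgen n) (Sum.inr (r - m))) := by
  have H := h.apply_wabBracket_apply (Lgen m) (Lgen n) (Sum.inr r)
  simp only [wabBracket_Lgen_Lgen, map_smul, Finsupp.smul_apply, smul_eq_mul,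
    wabBracket_Lgen_apply_inr] at H
  linear_combination H

theorem recurrence_Igen_inl (m n r : ℤ) :
    -((n : ℂ) + a + b * m) * φ (Igen (m + n)) (Sum.inl r) =
      1 / 2 * ((2 * m - r) * φ (Igen n) (Sum.inl (r - m))) := by
  have H := h.apply_wabBracket_apply (Lgen m) (Igen n) (Sum.inl r)
  simp only [wabBracket_Lgen_Igen, map_smul, Finsupp.smul_apply, smul_eq_mul,
    wabBracket_Lgen_apply_inl, wabBracket_Igen_apply_inl] at H
  linear_combination H

theorem recurrence_Igen_inr (m n r : ℤ) :
    -((n : ℂ) + a + b * m) * φ (Igen (m + n)) (Sum.inr r) =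
      1 / 2 * (-((n : ℂ) + a + b * (r - n)) * φ (Lgen m) (Sum.inl (r - n)) -
        ((r : ℂ) - m + a + b * m) * φ (Igen n) (Sum.inr (r - m))) := by
  have H := h.apply_wabBracket_apply (Lgen m) (Igen n) (Sum.inr r)
  simp only [wabBracket_Lgen_Igen, map_smul, Finsupp.smul_apply, smul_eq_mul,
    wabBracket_Lgen_apply_inr, wabBracket_Igen_apply_inr] at H
  linear_combination H

end IsHalfDerivation

section Recurrences

variable {K : Type*} [Field K] [CharZero K]

theorem Int.exists_add_eq_of_ne_zero_of_ne (m : ℤ) :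
    ∃ p q : ℤ, p + q = m ∧ p ≠ 0 ∧ q ≠ 0 ∧ p ≠ q := by
  rcases le_or_gt 0 m with hm | hm
  · exact ⟨m + 1, -1, by ring, by omega, by omega, by omega⟩
  · exact ⟨m - 1, 1, by ring, by omega, by omega, by omega⟩

theorem eq_shift_of_recurrence (c : K) (F : ℤ → ℤ → K)
    (hF : ∀ m n r : ℤ, ((m : K) - n) * F (m + n) r =
      1 / 2 * (((r : K) - 2 * n + c) * F m (r - n) + (2 * m - r - c) * F n (r - m)))
    (m r : ℤ) : F m r = F 0 (r - m) := by
  have generic : ∀ m r : ℤ, (2 * m - r : K) ≠ c → F m r = F 0 (r - m) := by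
    intro m r hmr
    have H := hF m 0 r
    simp only [add_zero, sub_zero, Int.cast_zero] at H
    have : ((2 * m - r : K) - c) * (F m r - F 0 (r - m)) = 0 := by linear_combination 2 * H
    exact sub_eq_zero.mp ((mul_eq_zero.mp this).resolve_left (sub_ne_zero.mpr hmr))
  by_cases hmr : (2 * m - r : K) = c
  · -- `p, q ≠ 0` keeps both terms on the right of `hF p q r` off the exceptional line
    obtain ⟨p, q, rfl, hp, hq, hpq⟩ := Int.exists_add_eq_of_ne_zero_of_ne m
    push_cast at hmr
    have Hp : F p (r - q) = F 0 (r - (p + q)) := by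
      rw [generic p (r - q) fun h => hq (by exact_mod_cast (by
        push_cast at h; linear_combination hmr - h : (q : K) = 0)), sub_sub, add_comm q]
    have Hq : F q (r - p) = F 0 (r - (p + q)) := by
      rw [generic q (r - p) fun h => hp (by exact_mod_cast (by
        push_cast at h; linear_combination hmr - h : (p : K) = 0)), sub_sub]
    refine mul_left_cancel₀ (sub_ne_zero.mpr (Int.cast_injective.ne hpq) : (p : K) - q ≠ 0) ?_
    rw [hF, Hp, Hq]
    ring
  · exact generic m r hmr

theorem eq_zero_of_recurrence (a c : K) (G : ℤ → ℤ → K)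
    (hG : ∀ m n r : ℤ, ((m : K) - n - a) * G (m + n) r = 1 / 2 * (2 * m - r - c) * G n (r - m))
    (n r : ℤ) : G n r = 0 := by
  have generic : ∀ n r : ℤ, (r + c - 2 * n - 2 * a : K) ≠ 0 → G n r = 0 := by
    intro n r hnr
    have H := hG 0 n r
    simp only [zero_add, sub_zero, Int.cast_zero] at H
    exact (mul_eq_zero.mp (by linear_combination 2 * H)).resolve_left hnr
  by_cases hnr : (r + c - 2 * n - 2 * a : K) = 0
  · -- on the exceptional line, `m = 1` and `m = 2` give two independent equations for `G n r`
    have H1 := hG 1 (n - 1) r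
    have H2 := hG 2 (n - 2) r
    have off : ∀ k : ℤ, k ≠ 0 → G (n - k) (r - k) = 0 := fun k hk => generic _ _ fun h =>
      hk (by exact_mod_cast (by push_cast at h; linear_combination h - hnr : (k : K) = 0))
    rw [add_sub_cancel, off 1 one_ne_zero] at H1
    rw [add_sub_cancel, off 2 two_ne_zero] at H2
    push_cast at H1 H2
    linear_combination (H2 - H1) / 2
  · exact generic n r hnr

end Recurrences

structure HasShiftCoeffs (φ : Wab →ₗ[ℂ] Wab) (α β : ℤ → ℂ) : Prop where
  Lgen_inl : ∀ m r, φ (Lgen m) (Sum.inl r) = α (r - m)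
  Lgen_inr : ∀ m r, φ (Lgen m) (Sum.inr r) = β (r - m)
  Igen_inl : ∀ m r, φ (Igen m) (Sum.inl r) = 0
  Igen_inr : ∀ m r, φ (Igen m) (Sum.inr r) = α (r - m)

section ShiftCoeffs

variable {φ : Wab →ₗ[ℂ] Wab}

theorem hasShiftCoeffs_iff (α β : ℤ →₀ ℂ) :
    HasShiftCoeffs φ α β ↔
      (∀ m, φ (Lgen m) =
        (α.sum fun t c => c • Lgen (m + t)) + (β.sum fun t c => c • Igen (m + t))) ∧
      (∀ m, φ (Igen m) = α.sum fun t c => c • Igen (m + t)) := by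
  constructor
  · intro hφ
    refine ⟨fun m => ?_, fun m => ?_⟩ <;> ext (r | r) <;>
      simp only [Finsupp.add_apply, sum_smul_Lgen_apply_inl, sum_smul_Lgen_apply_inr,
        sum_smul_Igen_apply_inl, sum_smul_Igen_apply_inr, add_zero, zero_add, hφ.Lgen_inl,
        hφ.Lgen_inr, hφ.Igen_inl, hφ.Igen_inr]
  · rintro ⟨hL, hI⟩
    refine ⟨fun m r => ?_, fun m r => ?_, fun m r => ?_, fun m r => ?_⟩ <;>
      simp only [hL, hI, Finsupp.add_apply, sum_smul_Lgen_apply_inl, sum_smul_Lgen_apply_inr,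
        sum_smul_Igen_apply_inl, sum_smul_Igen_apply_inr, add_zero, zero_add]

theorem IsHalfDerivation.hasShiftCoeffs {a : ℂ} (h : IsHalfDerivation a (-1) φ) :
    HasShiftCoeffs φ (fun t => φ (Lgen 0) (Sum.inl t)) (fun t => φ (Lgen 0) (Sum.inr t)) := by
  have hL : ∀ m r, φ (Lgen m) (Sum.inl r) = φ (Lgen 0) (Sum.inl (r - m)) :=
    eq_shift_of_recurrence 0 (fun m r => φ (Lgen m) (Sum.inl r)) fun m n r => by
      rw [h.recurrence_Lgen_inl]; ring
  refine ⟨hL, ?_, ?_, fun n r => ?_⟩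
  · exact eq_shift_of_recurrence a (fun m r => φ (Lgen m) (Sum.inr r)) fun m n r => by
      rw [h.recurrence_Lgen_inr]; ring
  · exact eq_zero_of_recurrence a 0 (fun n r => φ (Igen n) (Sum.inl r)) fun m n r => by
      linear_combination h.recurrence_Igen_inl m n r
  · refine sub_eq_zero.mp <| eq_zero_of_recurrence a a
      (fun n r => φ (Igen n) (Sum.inr r) - φ (Lgen 0) (Sum.inl (r - n))) (fun m n r => ?_) n r
    have H := h.recurrence_Igen_inr m n r
    rw [hL, show r - n - m = r - (m + n) by ring] at H
    rw [show r - m - n = r - (m + n) by ring]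
    linear_combination H

theorem HasShiftCoeffs.isHalfDerivation {α β : ℤ → ℂ} (hφ : HasShiftCoeffs φ α β) (a : ℂ) :
    IsHalfDerivation a (-1) φ := by
  refine isHalfDerivation_of_generators (fun m n => ?_) (fun m n => ?_) (fun m n => ?_) <;>
    rw [isHalfDerivationAt_iff] <;> rintro (r | r) <;>
    simp only [wabBracket_Lgen_Lgen, wabBracket_Lgen_Igen, wabBracket_Igen_Igen, map_smul,
      map_zero, Finsupp.smul_apply, Finsupp.coe_zero, Pi.zero_apply, smul_eq_mul,
      wabBracket_Lgen_apply_inl, wabBracket_Lgen_apply_inr, wabBracket_Igen_apply_inl,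
      wabBracket_Igen_apply_inr, hφ.Lgen_inl, hφ.Lgen_inr, hφ.Igen_inl, hφ.Igen_inr] <;>
    ring_nf

end ShiftCoeffs

/-- A linear map `φ` on `𝒲(a,-1)` is a 1/2-derivation iff there
are finitely supported families `(α_t)`, `(β_t)` with
`φ (L m) = Σ_t α_t L (m+t) + Σ_t β_t I (m+t)` and `φ (I m) = Σ_t α_t I (m+t)`. -/
theorem wab_neg_one_half_derivation_iff (a : ℂ) (φ : Wab →ₗ[ℂ] Wab) :
    (∀ x y : Wab, φ (wabBracket a (-1) x y) =
        (1 / 2 : ℂ) • (wabBracket a (-1) (φ x) y + wabBracket a (-1) x (φ y))) ↔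
    ∃ α β : ℤ →₀ ℂ,
      (∀ m : ℤ, φ (Lgen m) =
        (α.sum fun t c => c • Lgen (m + t)) + (β.sum fun t c => c • Igen (m + t))) ∧
      (∀ m : ℤ, φ (Igen m) = α.sum fun t c => c • Igen (m + t)) := by
  change IsHalfDerivation a (-1) φ ↔ _
  constructor
  · intro h
    exact ⟨Finsupp.comapDomain Sum.inl (φ (Lgen 0)) Sum.inl_injective.injOn,
      Finsupp.comapDomain Sum.inr (φ (Lgen 0)) Sum.inr_injective.injOn,
      (hasShiftCoeffs_iff _ _).mp h.hasShiftCoeffs⟩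
  · rintro ⟨α, β, hαβ⟩
    exact ((hasShiftCoeffs_iff α β).mpr hαβ).isHalfDerivation a
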